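/- arXiv:2102.02504 — 2 statements merged into one kernel-verified Lean document; each statement's English description precedes it below -/
import Mathlib

section
/- Let d, n, T ≥ 1 be natural numbers, Γ > 0, C > 0, β > 0 with n^{-β} ≤ C². For t = 1,…,T and i = 1,…,n let ℓ_{t,i} : ℝ^d → ℝ be convex and Γ-Lipschitz. Set γ̲ = n^{-β}, γ̄ = C², Λ = {ϑ ∈ ℝ^d : ‖ϑ‖ ≤ C} × [γ̲, γ̄], L = √(n²Γ⁴/4 + 4C²/γ̲² + 4C⁴/γ̲⁴), and α = (C/L)√((4+C²)/T). For each t define the meta-loss L_t(ϑ,γ) = inf_{‖θ‖≤C} { Σ_{i=1}^n ℓ_{t,i}(θ) + γΓ²n/2 + ‖θ-ϑ‖²/(2γ) }. Let λ_1 ∈ Λ and, for t = 1,…,T, let λ_{t+1} ∈ Λ minimize λ ↦ L_t(λ) + ‖λ - λ_t‖²/(2α) over Λ (distance √(‖ϑ-ϑ'‖²+(γ-γ')²)). Suppose s_1,…,s_T ∈ ℝ satisfy s_t ≤ L_t(λ_t) for each t. Then for all θ_1,…,θ_T ∈ ℝ^d with ‖θ_t‖ ≤ C, writing θ̄ = (1/T)Σ_{s=1}^T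 θ_s and σ = √((1/T)Σ_{t=1}^T ‖θ_t - θ̄‖²): Σ_{t=1}^T s_t ≤ Σ_{t=1}^T Σ_{i=1}^n ℓ_{t,i}(θ_t) + C√((n²Γ⁴/4 + 4C² n^{2β} + 4C⁴ n^{4β})(4+C²)T) + Γ²T n^{1-β}/2 + σ T (Γ√n + 1/C). -/
/-!
The meta-loss `L_t(ϑ, γ)` is the partial minimum over `θ` of `f θ + γ k + ‖θ - ϑ‖² / (2γ)`,
which is jointly convex in `(θ, ϑ, γ)` because `(u, γ) ↦ ‖u‖² / γ` is; hence `L_t` is convex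
on `Λ`. On `Λ` it is also Lipschitz, with constant at most `L`, for the Euclidean distance on
`ℝ^d × ℝ`. For a proximal step on a convex function in a Hilbert space, the three-point
inequality together with Lipschitz continuity gives
`∑ L_t(λ_t) ≤ ∑ L_t(λ) + ‖λ - λ_1‖² / (2α) + T α L² / 2`, and the chosen `α` balances the last
two terms into `C √(L² (4 + C²) T)`. Finally compare with the fixed parameter `λ = (θ̄, γ)`:
`L_t(θ̄, γ) ≤ ∑ i, ℓ t i (θ_t) + γ Γ² n / 2 + ‖θ_t - θ̄‖² / (2γ)`, and `γ = σ / (Γ √n)`,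
clipped to `[γ̲, γ̄]`, gives the last two terms of the bound.
-/

open Filter Topology Metric Set

theorem convexOn_norm_sq_div {E : Type*} [SeminormedAddCommGroup E] [NormedSpace ℝ E] :
    ConvexOn ℝ (univ ×ˢ Ioi 0) (fun p : E × ℝ => ‖p.1‖ ^ 2 / p.2) := by
  refine ⟨convex_univ.prod (convex_Ioi 0), ?_⟩
  rintro ⟨u, γ⟩ ⟨-, hγ : 0 < γ⟩ ⟨v, γ'⟩ ⟨-, hγ' : 0 < γ'⟩ a b ha hb hab
  simp only [Prod.smul_mk, Prod.mk_add_mk, smul_eq_mul]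
  have hden : 0 < a * γ + b * γ' := by
    rcases le_total γ γ' with h | h <;> nlinarith
  have htri : ‖a • u + b • v‖ ≤ a * ‖u‖ + b * ‖v‖ := by
    simpa [norm_smul, abs_of_nonneg ha, abs_of_nonneg hb] using norm_add_le (a • u) (b • v)
  -- Sedrakyan's form of Cauchy–Schwarz; the gap is `a b (‖u‖ γ' - ‖v‖ γ)² / (γ γ' (a γ + b γ'))`.
  have hscalar : (a * ‖u‖ + b * ‖v‖) ^ 2 / (a * γ + b * γ')
      ≤ a * (‖u‖ ^ 2 / γ) + b * (‖v‖ ^ 2 / γ') := by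
    rw [div_le_iff₀ hden, show a * (‖u‖ ^ 2 / γ) + b * (‖v‖ ^ 2 / γ')
      = (a * ‖u‖ ^ 2 * γ' + b * ‖v‖ ^ 2 * γ) / (γ * γ') by field_simp,
      div_mul_eq_mul_div, le_div_iff₀ (by positivity)]
    nlinarith [mul_nonneg (mul_nonneg ha hb) (sq_nonneg (‖u‖ * γ' - ‖v‖ * γ))]
  calc ‖a • u + b • v‖ ^ 2 / (a * γ + b * γ')
      ≤ (a * ‖u‖ + b * ‖v‖) ^ 2 / (a * γ + b * γ') := by gcongr
    _ ≤ _ := hscalar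

theorem ConvexOn.partial_sInf {E F : Type*} [AddCommGroup E] [Module ℝ E]
    [AddCommGroup F] [Module ℝ F] {S : Set E} {P : Set F} {Φ : E → F → ℝ}
    (hΦ : ConvexOn ℝ (S ×ˢ P) (fun q => Φ q.1 q.2)) (hP : Convex ℝ P) (hS : S.Nonempty)
    (hbdd : ∀ p ∈ P, BddBelow ((Φ · p) '' S)) :
    ConvexOn ℝ P (fun p => sInf ((Φ · p) '' S)) := by
  refine ⟨hP, fun p hp p' hp' a b ha hb hab => le_of_forall_pos_le_add fun ε hε => ?_⟩
  obtain ⟨_, ⟨θ, hθ, rfl⟩, hθε⟩ :=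
    exists_lt_of_csInf_lt (hS.image _) (lt_add_of_pos_right (sInf ((Φ · p) '' S)) hε)
  obtain ⟨_, ⟨θ', hθ', rfl⟩, hθ'ε⟩ :=
    exists_lt_of_csInf_lt (hS.image _) (lt_add_of_pos_right (sInf ((Φ · p') '' S)) hε)
  have hjoint := hΦ.2 (mk_mem_prod hθ hp) (mk_mem_prod hθ' hp') ha hb hab
  have hmem : a • θ + b • θ' ∈ S := (hΦ.1 (mk_mem_prod hθ hp) (mk_mem_prod hθ' hp') ha hb hab).1
  have hle := csInf_le (hbdd _ (hP hp hp' ha hb hab)) (mem_image_of_mem (Φ · (a • p + b • p')) hmem)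
  simp only [Prod.smul_mk, Prod.mk_add_mk, smul_eq_mul] at hjoint hle ⊢
  have h1 := mul_le_mul_of_nonneg_left hθε.le ha
  have h2 := mul_le_mul_of_nonneg_left hθ'ε.le hb
  have hε : a * ε + b * ε = ε := by rw [← add_mul, hab, one_mul]
  linarith

section Prox

variable {H : Type*} [NormedAddCommGroup H] [InnerProductSpace ℝ H]
  {K : Set H} {g : H → ℝ} {α L : ℝ} {x y z : H}

theorem ConvexOn.prox_three_point (hg : ConvexOn ℝ K g) (hy : y ∈ K)
    (hmin : IsMinOn (fun w => g w + ‖w - x‖ ^ 2 / (2 * α)) K y) (hz : z ∈ K) :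
    g y + ‖y - x‖ ^ 2 / (2 * α) + ‖z - y‖ ^ 2 / (2 * α) ≤ g z + ‖z - x‖ ^ 2 / (2 * α) := by
  set c := inner ℝ (y - x) (z - y)
  have hzx : ‖z - x‖ ^ 2 = ‖y - x‖ ^ 2 + 2 * c + ‖z - y‖ ^ 2 := by
    rw [← norm_add_sq_real, sub_add_sub_cancel']
  -- Moving from `y` towards `z` by `τ` cannot decrease the prox objective;
  -- divide by `τ` and let `τ → 0`.
  have hτ : ∀ τ ∈ Set.Ioc (0 : ℝ) 1, 0 ≤ g z - g y + (2 * c + τ * ‖z - y‖ ^ 2) / (2 * α) := by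
    rintro τ ⟨hτ0, hτ1⟩
    have hconv := hg.2 hz hy hτ0.le (sub_nonneg.2 hτ1) (add_sub_cancel τ 1)
    have hmem := hg.1 hz hy hτ0.le (sub_nonneg.2 hτ1) (add_sub_cancel τ 1)
    have hopt := hmin hmem
    have hnorm : ‖τ • z + (1 - τ) • y - x‖ ^ 2 = ‖y - x‖ ^ 2 + τ * (2 * c + τ * ‖z - y‖ ^ 2) := by
      rw [show τ • z + (1 - τ) • y - x = (y - x) + τ • (z - y) by module, norm_add_sq_real,
        inner_smul_right, norm_smul, mul_pow, Real.norm_eq_abs, sq_abs]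
      ring
    simp only [Set.mem_ofPred_eq, hnorm, add_div, smul_eq_mul] at hopt hconv
    have key : 0 ≤ τ * (g z - g y + (2 * c + τ * ‖z - y‖ ^ 2) / (2 * α)) := by
      rw [mul_add, ← mul_div_assoc]
      linarith
    exact nonneg_of_mul_nonneg_right key hτ0
  have hlim : Tendsto (fun τ : ℝ => g z - g y + (2 * c + τ * ‖z - y‖ ^ 2) / (2 * α))
      (𝓝[>] 0) (𝓝 (g z - g y + (2 * c + 0 * ‖z - y‖ ^ 2) / (2 * α))) :=
    (Continuous.tendsto (by fun_prop) 0).mono_left nhdsWithin_le_nhds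
  have := ge_of_tendsto hlim (eventually_of_mem (Ioc_mem_nhdsGT one_pos) hτ)
  rw [zero_mul, add_zero] at this
  rw [hzx, add_div, add_div]
  linarith

theorem ConvexOn.prox_step_regret (hg : ConvexOn ℝ K g) (hα : 0 < α) (hy : y ∈ K)
    (hmin : IsMinOn (fun w => g w + ‖w - x‖ ^ 2 / (2 * α)) K y)
    (hlip : g x ≤ g y + L * ‖y - x‖) (hz : z ∈ K) :
    g x ≤ g z + (‖z - x‖ ^ 2 - ‖z - y‖ ^ 2) / (2 * α) + α * L ^ 2 / 2 := by
  have amgm : L * ‖y - x‖ ≤ α * L ^ 2 / 2 + ‖y - x‖ ^ 2 / (2 * α) := by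
    have : α * L ^ 2 / 2 + ‖y - x‖ ^ 2 / (2 * α) - L * ‖y - x‖
        = (α * L - ‖y - x‖) ^ 2 / (2 * α) := by
      field_simp
      ring
    linarith [div_nonneg (sq_nonneg (α * L - ‖y - x‖)) (by positivity : (0 : ℝ) ≤ 2 * α)]
  have := hg.prox_three_point hy hmin hz
  rw [sub_div]
  linarith

theorem online_prox_regret {g : ℕ → H → ℝ} {x : ℕ → H} (hα : 0 < α) {T : ℕ}
    (hg : ∀ t ∈ Finset.Icc 1 T, ConvexOn ℝ K (g t)) (hxK : ∀ t ∈ Finset.Icc 1 T, x (t + 1) ∈ K)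
    (hmin : ∀ t ∈ Finset.Icc 1 T, IsMinOn (fun w => g t w + ‖w - x t‖ ^ 2 / (2 * α)) K (x (t + 1)))
    (hlip : ∀ t ∈ Finset.Icc 1 T, g t (x t) ≤ g t (x (t + 1)) + L * ‖x (t + 1) - x t‖)
    (hz : z ∈ K) :
    ∑ t ∈ Finset.Icc 1 T, g t (x t)
      ≤ ∑ t ∈ Finset.Icc 1 T, g t z + ‖z - x 1‖ ^ 2 / (2 * α) + T * (α * L ^ 2 / 2) := by
  set D : ℕ → ℝ := fun t => ‖z - x t‖ ^ 2
  have hstep : ∀ t ∈ Finset.Icc 1 T,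
      g t (x t) ≤ g t z + (D t - D (t + 1)) / (2 * α) + α * L ^ 2 / 2 := fun t ht =>
    (hg t ht).prox_step_regret hα (hxK t ht) (hmin t ht) (hlip t ht) hz
  have htele : ∑ t ∈ Finset.Icc 1 T, (D t - D (t + 1)) = D 1 - D (T + 1) := by
    rw [← Finset.Ico_add_one_right_eq_Icc, ← neg_sub, ← Finset.sum_Ico_sub D (by omega),
      ← Finset.sum_neg_distrib]
    simp only [neg_sub]
  calc ∑ t ∈ Finset.Icc 1 T, g t (x t)
      ≤ ∑ t ∈ Finset.Icc 1 T, (g t z + (D t - D (t + 1)) / (2 * α) + α * L ^ 2 / 2) :=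
        Finset.sum_le_sum hstep
    _ = ∑ t ∈ Finset.Icc 1 T, g t z + (D 1 - D (T + 1)) / (2 * α) + T * (α * L ^ 2 / 2) := by
        rw [Finset.sum_add_distrib, Finset.sum_add_distrib, ← Finset.sum_div, htele,
          Finset.sum_const, Nat.card_Icc, nsmul_eq_mul]
        simp
    _ ≤ _ := by
        have : 0 ≤ D (T + 1) / (2 * α) := by positivity
        rw [sub_div]
        linarith

end Prox

section MetaLoss

variable {E : Type*} [NormedAddCommGroup E] {f : E → ℝ} {C k γ γ' γlo : ℝ}
  {θ ϑ ϑ' : E}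

noncomputable def metaObjective (f : E → ℝ) (k : ℝ) (θ ϑ : E) (γ : ℝ) : ℝ :=
  f θ + γ * k + ‖θ - ϑ‖ ^ 2 / (2 * γ)

/-- With `f = ∑ i, ℓ t i` and `k = Γ² n / 2` this is the paper's meta-loss `L_t(ϑ, γ)`. -/
noncomputable def metaLoss (f : E → ℝ) (C k : ℝ) (ϑ : E) (γ : ℝ) : ℝ :=
  sInf ((metaObjective f k · ϑ γ) '' closedBall 0 C)

theorem bddBelow_metaObjective_image (hf : BddBelow (f '' closedBall 0 C)) (hk : 0 ≤ k)
    (hγ : 0 < γ) : BddBelow ((metaObjective f k · ϑ γ) '' closedBall 0 C) := by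
  obtain ⟨B, hB⟩ := hf
  refine ⟨B, forall_mem_image.2 fun θ hθ => ?_⟩
  have hfθ := hB (mem_image_of_mem f hθ)
  have hγk : 0 ≤ γ * k := mul_nonneg hγ.le hk
  have hsq : 0 ≤ ‖θ - ϑ‖ ^ 2 / (2 * γ) := by positivity
  simp only [metaObjective]
  linarith

theorem metaLoss_le (hf : BddBelow (f '' closedBall 0 C)) (hk : 0 ≤ k) (hγ : 0 < γ)
    (hθ : θ ∈ closedBall 0 C) : metaLoss f C k ϑ γ ≤ metaObjective f k θ ϑ γ :=
  csInf_le (bddBelow_metaObjective_image hf hk hγ) (mem_image_of_mem _ hθ)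

theorem le_metaLoss {a : ℝ} (hC : 0 ≤ C) (h : ∀ θ ∈ closedBall 0 C, a ≤ metaObjective f k θ ϑ γ) :
    a ≤ metaLoss f C k ϑ γ :=
  le_csInf ((nonempty_closedBall.2 hC).image _) (forall_mem_image.2 h)

theorem convexOn_metaObjective [NormedSpace ℝ E] (hf : ConvexOn ℝ (closedBall 0 C) f) :
    ConvexOn ℝ (closedBall 0 C ×ˢ (univ ×ˢ Ioi 0))
      (fun q : E × E × ℝ => metaObjective f k q.1 q.2.1 q.2.2) := by
  refine ⟨hf.1.prod (convex_univ.prod (convex_Ioi 0)), ?_⟩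
  rintro ⟨θ, ϑ, γ⟩ ⟨hθ, hϑγ⟩ ⟨θ', ϑ', γ'⟩ ⟨hθ', hϑγ'⟩ a b ha hb hab
  have hfθ := hf.2 hθ hθ' ha hb hab
  have hpersp := (convexOn_norm_sq_div (E := E)).2 (x := (θ - ϑ, 2 * γ)) (y := (θ' - ϑ', 2 * γ'))
    ⟨trivial, by simpa using hϑγ.2⟩ ⟨trivial, by simpa using hϑγ'.2⟩ ha hb hab
  simp only [Prod.smul_mk, Prod.mk_add_mk, smul_eq_mul, metaObjective] at hfθ hpersp ⊢
  rw [show a • θ + b • θ' - (a • ϑ + b • ϑ') = a • (θ - ϑ) + b • (θ' - ϑ') by module,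
    show 2 * (a * γ + b * γ') = a * (2 * γ) + b * (2 * γ') by ring]
  linarith

theorem convexOn_metaLoss [NormedSpace ℝ E] (hC : 0 ≤ C) (hk : 0 ≤ k)
    (hfb : BddBelow (f '' closedBall 0 C)) (hf : ConvexOn ℝ (closedBall 0 C) f) :
    ConvexOn ℝ (univ ×ˢ Ioi 0) (fun p : E × ℝ => metaLoss f C k p.1 p.2) :=
  (convexOn_metaObjective hf).partial_sInf (convex_univ.prod (convex_Ioi 0))
    (nonempty_closedBall.2 hC) fun _ hp => bddBelow_metaObjective_image hfb hk hp.2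

theorem metaLoss_le_add (hC : 0 ≤ C) (hk : 0 ≤ k) (hf : BddBelow (f '' closedBall 0 C))
    (hγlo : 0 < γlo) (hϑ : ‖ϑ‖ ≤ C) (hϑ' : ‖ϑ'‖ ≤ C) (hγ : γlo ≤ γ) (hγ' : γlo ≤ γ') :
    metaLoss f C k ϑ γ ≤
      metaLoss f C k ϑ' γ' + 2 * C / γlo * ‖ϑ - ϑ'‖ + max k (2 * C ^ 2 / γlo ^ 2) * |γ - γ'| := by
  have hγ0 : 0 < γ := hγlo.trans_le hγ
  have hγ0' : 0 < γ' := hγlo.trans_le hγ'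
  set bd := 2 * C / γlo * ‖ϑ - ϑ'‖ + max k (2 * C ^ 2 / γlo ^ 2) * |γ - γ'|
  suffices h : ∀ θ ∈ closedBall 0 C, metaObjective f k θ ϑ γ ≤ metaObjective f k θ ϑ' γ' + bd by
    have := le_metaLoss (ϑ := ϑ') (γ := γ') hC fun θ hθ =>
      sub_le_iff_le_add.2 ((metaLoss_le hf hk hγ0 hθ).trans (h θ hθ))
    linarith
  intro θ hθ
  rw [mem_closedBall_zero_iff] at hθ
  have hr : ‖θ - ϑ'‖ ≤ 2 * C := (norm_sub_le θ ϑ').trans (by linarith)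
  have hcentre : ‖θ - ϑ‖ ^ 2 / (2 * γ) ≤ ‖θ - ϑ'‖ ^ 2 / (2 * γ) + 2 * C / γlo * ‖ϑ - ϑ'‖ := by
    have htri : ‖θ - ϑ‖ ≤ ‖θ - ϑ'‖ + ‖ϑ - ϑ'‖ := by
      simpa [norm_sub_rev ϑ' ϑ] using norm_sub_le_norm_sub_add_norm_sub θ ϑ' ϑ
    have hdiff : ‖θ - ϑ‖ ^ 2 - ‖θ - ϑ'‖ ^ 2 ≤ 4 * C * ‖ϑ - ϑ'‖ := by
      have : ‖θ - ϑ‖ ≤ 2 * C := (norm_sub_le θ ϑ).trans (by linarith)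
      nlinarith [norm_nonneg (θ - ϑ), norm_nonneg (θ - ϑ'), norm_nonneg (ϑ - ϑ')]
    calc ‖θ - ϑ‖ ^ 2 / (2 * γ)
        ≤ ‖θ - ϑ'‖ ^ 2 / (2 * γ) + 4 * C * ‖ϑ - ϑ'‖ / (2 * γ) := by
          rw [← add_div]
          gcongr
          linarith
      _ ≤ ‖θ - ϑ'‖ ^ 2 / (2 * γ) + 4 * C * ‖ϑ - ϑ'‖ / (2 * γlo) := by gcongr
      _ = _ := by
          field_simp
          ring
  have hscale : γ * k + ‖θ - ϑ'‖ ^ 2 / (2 * γ)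
      ≤ γ' * k + ‖θ - ϑ'‖ ^ 2 / (2 * γ') + max k (2 * C ^ 2 / γlo ^ 2) * |γ - γ'| := by
    set q := ‖θ - ϑ'‖ ^ 2 / (2 * γ * γ') with hqdef
    have hq : 0 ≤ q ∧ q ≤ 2 * C ^ 2 / γlo ^ 2 := by
      refine ⟨by positivity, ?_⟩
      calc q ≤ (2 * C) ^ 2 / (2 * γlo * γlo) := by rw [hqdef]; gcongr
        _ = 2 * C ^ 2 / γlo ^ 2 := by field_simp
    have hfactor : γ * k + ‖θ - ϑ'‖ ^ 2 / (2 * γ) - (γ' * k + ‖θ - ϑ'‖ ^ 2 / (2 * γ'))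
        = (γ - γ') * (k - q) := by
      rw [hqdef]
      field_simp
      ring
    have hkq : |k - q| ≤ max k (2 * C ^ 2 / γlo ^ 2) :=
      abs_sub_le_iff.2 ⟨by linarith [le_max_left k (2 * C ^ 2 / γlo ^ 2)],
        by linarith [le_max_right k (2 * C ^ 2 / γlo ^ 2)]⟩
    have := (le_abs_self ((γ - γ') * (k - q))).trans_eq (abs_mul _ _)
    nlinarith [mul_le_mul_of_nonneg_left hkq (abs_nonneg (γ - γ'))]
  unfold metaObjective
  linarith

end MetaLoss

theorem WithLp.prod_mul_norm_fst_add_mul_norm_snd_le {α β : Type*} [SeminormedAddCommGroup α]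
    [SeminormedAddCommGroup β] (a b : ℝ) (x : WithLp 2 (α × β)) :
    a * ‖x.fst‖ + b * ‖x.snd‖ ≤ √(a ^ 2 + b ^ 2) * ‖x‖ := by
  rw [WithLp.prod_norm_eq_of_L2, ← Real.sqrt_mul (by positivity)]
  apply Real.le_sqrt_of_sq_le
  nlinarith [sq_nonneg (a * ‖x.snd‖ - b * ‖x.fst‖)]

theorem metaLoss_le_add_norm_toLp {E : Type*} [NormedAddCommGroup E] {f : E → ℝ} {C k γlo : ℝ}
    (hC : 0 ≤ C) (hk : 0 ≤ k) (hf : BddBelow (f '' closedBall 0 C)) (hγlo : 0 < γlo)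
    {p q : E × ℝ} (hp : ‖p.1‖ ≤ C ∧ γlo ≤ p.2) (hq : ‖q.1‖ ≤ C ∧ γlo ≤ q.2) :
    metaLoss f C k p.1 p.2 ≤ metaLoss f C k q.1 q.2
      + √((2 * C / γlo) ^ 2 + max k (2 * C ^ 2 / γlo ^ 2) ^ 2)
        * ‖WithLp.toLp 2 p - WithLp.toLp 2 q‖ := by
  have hcs := WithLp.prod_mul_norm_fst_add_mul_norm_snd_le (2 * C / γlo)
    (max k (2 * C ^ 2 / γlo ^ 2)) (WithLp.toLp 2 p - WithLp.toLp 2 q)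
  change _ * ‖p.1 - q.1‖ + _ * ‖p.2 - q.2‖ ≤ _ at hcs
  rw [Real.norm_eq_abs] at hcs
  linarith [metaLoss_le_add hC hk hf hγlo hp.1 hq.1 hp.2 hq.2]

theorem opms_regret {E : Type*} [NormedAddCommGroup E] [InnerProductSpace ℝ E]
    {f : ℕ → E → ℝ} {ML : ℕ → E → ℝ → ℝ} {lam : ℕ → E × ℝ} {C k γlo γhi α L γ : ℝ} {T : ℕ}
    {ϑ : E} (hC : 0 ≤ C) (hk : 0 ≤ k) (hγlo : 0 < γlo) (hα : 0 < α) (hL : 0 ≤ L)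
    (hLip : (2 * C / γlo) ^ 2 + max k (2 * C ^ 2 / γlo ^ 2) ^ 2 ≤ L ^ 2)
    (hfb : ∀ t ∈ Finset.Icc 1 T, BddBelow (f t '' closedBall 0 C))
    (hfc : ∀ t ∈ Finset.Icc 1 T, ConvexOn ℝ (closedBall 0 C) (f t))
    (hML : ∀ t ∈ Finset.Icc 1 T, ML t = metaLoss (f t) C k)
    (hlam1 : ‖(lam 1).1‖ ≤ C ∧ (lam 1).2 ∈ Icc γlo γhi)
    (hmem : ∀ t ∈ Finset.Icc 1 T, ‖(lam (t + 1)).1‖ ≤ C ∧ (lam (t + 1)).2 ∈ Icc γlo γhi)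
    (hmin : ∀ t ∈ Finset.Icc 1 T, ∀ ϑ : E, ‖ϑ‖ ≤ C → ∀ γ ∈ Icc γlo γhi,
      ML t (lam (t + 1)).1 (lam (t + 1)).2 +
        (‖(lam (t + 1)).1 - (lam t).1‖ ^ 2 + ((lam (t + 1)).2 - (lam t).2) ^ 2) / (2 * α)
      ≤ ML t ϑ γ + (‖ϑ - (lam t).1‖ ^ 2 + (γ - (lam t).2) ^ 2) / (2 * α))
    (hϑ : ‖ϑ‖ ≤ C) (hγ : γ ∈ Icc γlo γhi) :
    ∑ t ∈ Finset.Icc 1 T, ML t (lam t).1 (lam t).2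
      ≤ ∑ t ∈ Finset.Icc 1 T, ML t ϑ γ + (‖ϑ - (lam 1).1‖ ^ 2 + (γ - (lam 1).2) ^ 2) / (2 * α)
        + T * (α * L ^ 2 / 2) := by
  -- `Λ` with the distance of the statement is a convex subset of the Hilbert space `E ×₂ ℝ`.
  let e := WithLp.linearEquiv 2 ℝ (E × ℝ)
  let K := e ⁻¹' (closedBall (0 : E) C ×ˢ Icc γlo γhi)
  have hK : Convex ℝ K :=
    ((convex_closedBall (0 : E) C).prod (convex_Icc γlo γhi)).linear_preimage e.toLinearMap
  have memK (p : E × ℝ) : WithLp.toLp 2 p ∈ K ↔ ‖p.1‖ ≤ C ∧ p.2 ∈ Icc γlo γhi := by simp [K, e]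
  have hdist (p q : E × ℝ) :
      ‖WithLp.toLp 2 p - WithLp.toLp 2 q‖ ^ 2 = ‖p.1 - q.1‖ ^ 2 + (p.2 - q.2) ^ 2 := by
    rw [← WithLp.toLp_sub, WithLp.prod_norm_sq_eq_of_L2, Real.norm_eq_abs, sq_abs]
    rfl
  have hlamΛ : ∀ t ∈ Finset.Icc 1 T, ‖(lam t).1‖ ≤ C ∧ (lam t).2 ∈ Icc γlo γhi := by
    rintro (_ | _ | s) ht <;> rw [Finset.mem_Icc] at ht
    · omega
    · exact hlam1
    · exact hmem (s + 1) (Finset.mem_Icc.2 ⟨by omega, by omega⟩)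
  rw [← hdist (ϑ, γ) (lam 1)]
  refine online_prox_regret (K := K) (g := fun t p => ML t (WithLp.ofLp p).1 (WithLp.ofLp p).2)
    hα (fun t ht => ?_) (fun t ht => (memK _).2 (hmem t ht)) (fun t ht => ?_) (fun t ht => ?_)
    ((memK (ϑ, γ)).2 ⟨hϑ, hγ⟩)
  · have hconv := (convexOn_metaLoss hC hk (hfb t ht) (hfc t ht)).comp_linearMap e.toLinearMap
    simp only [hML t ht]
    exact hconv.subset (fun p hp => ⟨trivial, hγlo.trans_le hp.2.1⟩) hK
  · intro z hz
    obtain ⟨p, rfl⟩ : ∃ p, WithLp.toLp 2 p = z := ⟨WithLp.ofLp z, by simp⟩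
    obtain ⟨hp1, hp2⟩ := (memK p).1 hz
    simpa only [Set.mem_ofPred_eq, hdist] using hmin t ht p.1 hp1 p.2 hp2
  · obtain ⟨hx1, hx2⟩ := hlamΛ t ht
    obtain ⟨hy1, hy2⟩ := hmem t ht
    simp only [hML t ht]
    rw [norm_sub_rev]
    refine (metaLoss_le_add_norm_toLp hC hk (hfb t ht) hγlo ⟨hx1, hx2.1⟩ ⟨hy1, hy2.1⟩).trans ?_
    gcongr
    exact Real.sqrt_le_iff.2 ⟨hL, hLip⟩

section Comparator

variable {E : Type*} [NormedAddCommGroup E] [NormedSpace ℝ E] {T : ℕ} {θ : ℕ → E} {C : ℝ}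

noncomputable def avg (T : ℕ) (θ : ℕ → E) : E :=
  (1 / (T : ℝ)) • ∑ u ∈ Finset.Icc 1 T, θ u

noncomputable def dispersion (T : ℕ) (θ : ℕ → E) : ℝ :=
  √((1 / (T : ℝ)) * ∑ t ∈ Finset.Icc 1 T, ‖θ t - avg T θ‖ ^ 2)

theorem norm_avg_le (hT : 1 ≤ T) (hθ : ∀ t ∈ Finset.Icc 1 T, ‖θ t‖ ≤ C) : ‖avg T θ‖ ≤ C := by
  have hw : ∑ _t ∈ Finset.Icc 1 T, 1 / (T : ℝ) = 1 := by
    rw [Finset.sum_const, Nat.card_Icc, Nat.add_sub_cancel, nsmul_eq_mul, mul_one_div_cancel]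
    exact_mod_cast (by omega : T ≠ 0)
  have := (convex_closedBall (0 : E) C).sum_mem (fun _ _ => by positivity) hw
    fun t ht => mem_closedBall_zero_iff.2 (hθ t ht)
  rwa [← Finset.smul_sum, ← avg, mem_closedBall_zero_iff] at this

theorem sum_norm_sub_avg_sq (hT : 1 ≤ T) :
    ∑ t ∈ Finset.Icc 1 T, ‖θ t - avg T θ‖ ^ 2 = T * dispersion T θ ^ 2 := by
  have hT0 : (0 : ℝ) < T := by exact_mod_cast hT
  rw [dispersion, Real.sq_sqrt (by positivity)]
  field_simp

theorem dispersion_le (hT : 1 ≤ T) (hθ : ∀ t ∈ Finset.Icc 1 T, ‖θ t‖ ≤ C) :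
    dispersion T θ ≤ 2 * C := by
  have hT0 : (0 : ℝ) < T := by exact_mod_cast hT
  have hC : 0 ≤ C := (norm_nonneg _).trans (hθ 1 (Finset.mem_Icc.2 ⟨le_rfl, hT⟩))
  have hsum : ∑ t ∈ Finset.Icc 1 T, ‖θ t - avg T θ‖ ^ 2 ≤ T * (2 * C) ^ 2 := by
    calc ∑ t ∈ Finset.Icc 1 T, ‖θ t - avg T θ‖ ^ 2
        ≤ ∑ _t ∈ Finset.Icc 1 T, (2 * C) ^ 2 := Finset.sum_le_sum fun t ht => by
          have := (norm_sub_le _ _).trans (add_le_add (hθ t ht) (norm_avg_le hT hθ))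
          gcongr
          linarith
      _ = T * (2 * C) ^ 2 := by simp
  rw [sum_norm_sub_avg_sq hT] at hsum
  exact (pow_le_pow_iff_left₀ (Real.sqrt_nonneg _) (by positivity) two_ne_zero).1
    (le_of_mul_le_mul_left hsum hT0)

theorem sum_metaLoss_avg_le {f : ℕ → E → ℝ} {k γ : ℝ} (hT : 1 ≤ T) (hk : 0 ≤ k) (hγ : 0 < γ)
    (hfb : ∀ t ∈ Finset.Icc 1 T, BddBelow (f t '' closedBall 0 C))
    (hθ : ∀ t ∈ Finset.Icc 1 T, ‖θ t‖ ≤ C) :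
    ∑ t ∈ Finset.Icc 1 T, metaLoss (f t) C k (avg T θ) γ
      ≤ ∑ t ∈ Finset.Icc 1 T, f t (θ t) + T * (γ * k + dispersion T θ ^ 2 / (2 * γ)) := by
  calc ∑ t ∈ Finset.Icc 1 T, metaLoss (f t) C k (avg T θ) γ
      ≤ ∑ t ∈ Finset.Icc 1 T, metaObjective (f t) k (θ t) (avg T θ) γ :=
        Finset.sum_le_sum fun t ht =>
          metaLoss_le (hfb t ht) hk hγ (mem_closedBall_zero_iff.2 (hθ t ht))
    _ = _ := by
        simp only [metaObjective, Finset.sum_add_distrib, ← Finset.sum_div,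
          sum_norm_sub_avg_sq hT, Finset.sum_const, Nat.card_Icc, Nat.add_sub_cancel, nsmul_eq_mul]
        ring

end Comparator

theorem exists_stepSize_le {Γ n C γlo σ : ℝ} (hΓ : 0 < Γ) (hn : 0 < n) (hC : 0 < C)
    (hγlo : 0 < γlo) (hγC : γlo ≤ C ^ 2) (hσ : 0 ≤ σ) (hσC : σ ≤ 2 * C) :
    ∃ γ ∈ Icc γlo (C ^ 2),
      γ * (Γ ^ 2 * n / 2) + σ ^ 2 / (2 * γ) ≤ Γ ^ 2 * n * γlo / 2 + σ * (Γ * √n + 1 / C) := by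
  set a := Γ * √n
  have ha : 0 < a := by positivity
  have ha2 : Γ ^ 2 * n = a ^ 2 := by rw [mul_pow, Real.sq_sqrt hn.le]
  rw [ha2, mul_add, mul_one_div]
  have hσC' : 0 ≤ σ / C := by positivity
  have hσa : 0 ≤ σ * a := by positivity
  have hlo_term : 0 ≤ a ^ 2 * γlo / 2 := by positivity
  -- The unconstrained minimiser of `γ a² / 2 + σ² / (2γ)` is `σ / a`; clip it to `[γlo, C²]`.
  rcases le_or_gt σ (γlo * a) with hlo | hlo
  · refine ⟨γlo, ⟨le_rfl, hγC⟩, ?_⟩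
    have : σ ^ 2 / (2 * γlo) ≤ σ * a / 2 := by
      rw [div_le_div_iff₀ (by positivity) two_pos]
      nlinarith [mul_le_mul_of_nonneg_left hlo hσ]
    linarith
  rcases le_or_gt σ (C ^ 2 * a) with hhi | hhi
  · refine ⟨σ / a, ⟨(le_div_iff₀ ha).2 hlo.le, (div_le_iff₀ ha).2 hhi⟩, ?_⟩
    have hσ0 : 0 < σ := (mul_pos hγlo ha).trans hlo
    have : σ / a * (a ^ 2 / 2) + σ ^ 2 / (2 * (σ / a)) = σ * a := by
      field_simp
      ring
    linarith
  · refine ⟨C ^ 2, ⟨hγC, le_rfl⟩, ?_⟩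
    have h1 : C ^ 2 * (a ^ 2 / 2) ≤ σ * a / 2 := by nlinarith
    have h2 : σ ^ 2 / (2 * C ^ 2) ≤ σ / C := by
      rw [div_le_div_iff₀ (by positivity) hC]
      nlinarith [mul_le_mul_of_nonneg_left hσC (mul_nonneg hσ hC.le)]
    linarith

theorem regret_at_tuned_step {C L c T : ℝ} (hC : 0 < C) (hL : 0 < L) (hc : 0 < c) (hT : 0 < T) :
    C ^ 2 * c / (2 * (C / L * √(c / T))) + T * (C / L * √(c / T) * L ^ 2 / 2)
      = C * √(L ^ 2 * c * T) := by
  have hsc := Real.sq_sqrt hc.le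
  have hsT := Real.sq_sqrt hT.le
  have : 0 < √c := Real.sqrt_pos.2 hc
  have : 0 < √T := Real.sqrt_pos.2 hT
  rw [Real.sqrt_div hc.le, Real.sqrt_mul (by positivity), Real.sqrt_mul (by positivity),
    Real.sqrt_sq hL.le]
  field_simp
  rw [hsc, hsT]
  ring

theorem lipschitzConst_sq_le (n Γ C γlo : ℝ) :
    (2 * C / γlo) ^ 2 + max (Γ ^ 2 * n / 2) (2 * C ^ 2 / γlo ^ 2) ^ 2
      ≤ n ^ 2 * Γ ^ 4 / 4 + 4 * C ^ 2 / γlo ^ 2 + 4 * C ^ 4 / γlo ^ 4 := by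
  have hmax : max (Γ ^ 2 * n / 2) (2 * C ^ 2 / γlo ^ 2) ^ 2
      ≤ (Γ ^ 2 * n / 2) ^ 2 + (2 * C ^ 2 / γlo ^ 2) ^ 2 := by
    rcases max_cases (Γ ^ 2 * n / 2) (2 * C ^ 2 / γlo ^ 2) with ⟨h, -⟩ | ⟨h, -⟩ <;> rw [h] <;>
      nlinarith [sq_nonneg (Γ ^ 2 * n / 2), sq_nonneg (2 * C ^ 2 / γlo ^ 2)]
  calc _ ≤ (2 * C / γlo) ^ 2 + ((Γ ^ 2 * n / 2) ^ 2 + (2 * C ^ 2 / γlo ^ 2) ^ 2) := by gcongr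
    _ = _ := by ring

theorem div_rpow_neg_pow {x : ℝ} (hx : 0 < x) (c β : ℝ) (m : ℕ) :
    c / (x ^ (-β)) ^ m = c * x ^ (m * β) := by
  rw [div_eq_mul_inv, ← Real.rpow_natCast, ← Real.rpow_mul hx.le, ← Real.rpow_neg hx.le]
  ring_nf

theorem norm_sub_sq_add_sub_sq_le {E : Type*} [SeminormedAddCommGroup E] {ϑ ϑ' : E}
    {C γlo γ γ' : ℝ} (hϑ : ‖ϑ‖ ≤ C) (hϑ' : ‖ϑ'‖ ≤ C) (hγlo : 0 ≤ γlo)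
    (hγ : γ ∈ Icc γlo (C ^ 2)) (hγ' : γ' ∈ Icc γlo (C ^ 2)) :
    ‖ϑ - ϑ'‖ ^ 2 + (γ - γ') ^ 2 ≤ C ^ 2 * (4 + C ^ 2) := by
  have h1 : ‖ϑ - ϑ'‖ ≤ 2 * C := (norm_sub_le _ _).trans (by linarith)
  have h2 : |γ - γ'| ≤ C ^ 2 :=
    abs_sub_le_iff.2 ⟨by linarith [hγ.2, hγ'.1], by linarith [hγ.1, hγ'.2]⟩
  nlinarith [norm_nonneg (ϑ - ϑ'), sq_abs (γ - γ'), abs_nonneg (γ - γ')]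

theorem oga_meta_learning_regret_general
    (d n T : ℕ) (hn : 1 ≤ n) (hT : 1 ≤ T)
    (Γ C β : ℝ) (hΓ : 0 < Γ) (hC : 0 < C)
    (hβC : (n : ℝ) ^ (-β) ≤ C ^ 2)
    (ℓ : ℕ → ℕ → EuclideanSpace ℝ (Fin d) → ℝ)
    (hconv : ∀ t ∈ Finset.Icc 1 T, ∀ i ∈ Finset.Icc 1 n,
      ∀ x y : EuclideanSpace ℝ (Fin d), ∀ c : ℝ, 0 ≤ c → c ≤ 1 →
        ℓ t i (c • x + (1 - c) • y) ≤ c * ℓ t i x + (1 - c) * ℓ t i y)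
    (hlip : ∀ t ∈ Finset.Icc 1 T, ∀ i ∈ Finset.Icc 1 n,
      ∀ x y : EuclideanSpace ℝ (Fin d), |ℓ t i x - ℓ t i y| ≤ Γ * ‖x - y‖)
    (γlo γhi L α : ℝ)
    (hγlo : γlo = (n : ℝ) ^ (-β)) (hγhi : γhi = C ^ 2)
    (hLdef : L = Real.sqrt ((n : ℝ) ^ 2 * Γ ^ 4 / 4 + 4 * C ^ 2 / γlo ^ 2 +
      4 * C ^ 4 / γlo ^ 4))
    (hαdef : α = (C / L) * Real.sqrt ((4 + C ^ 2) / T))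
    (ML : ℕ → EuclideanSpace ℝ (Fin d) → ℝ → ℝ)
    (hML : ∀ t ∈ Finset.Icc 1 T, ∀ ϑ : EuclideanSpace ℝ (Fin d), ∀ γ : ℝ,
      ML t ϑ γ = sInf {r : ℝ | ∃ θ : EuclideanSpace ℝ (Fin d), ‖θ‖ ≤ C ∧
        r = ∑ i ∈ Finset.Icc 1 n, ℓ t i θ + γ * Γ ^ 2 * n / 2 + ‖θ - ϑ‖ ^ 2 / (2 * γ)})
    (lam : ℕ → EuclideanSpace ℝ (Fin d) × ℝ)
    (hlam1 : ‖(lam 1).1‖ ≤ C ∧ (lam 1).2 ∈ Set.Icc γlo γhi)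
    (hmem : ∀ t ∈ Finset.Icc 1 T,
      ‖(lam (t + 1)).1‖ ≤ C ∧ (lam (t + 1)).2 ∈ Set.Icc γlo γhi)
    (hmin : ∀ t ∈ Finset.Icc 1 T, ∀ ϑ : EuclideanSpace ℝ (Fin d), ‖ϑ‖ ≤ C →
      ∀ γ ∈ Set.Icc γlo γhi,
      ML t (lam (t + 1)).1 (lam (t + 1)).2 +
        (‖(lam (t + 1)).1 - (lam t).1‖ ^ 2 + ((lam (t + 1)).2 - (lam t).2) ^ 2) / (2 * α)
      ≤ ML t ϑ γ + (‖ϑ - (lam t).1‖ ^ 2 + (γ - (lam t).2) ^ 2) / (2 * α))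
    (s : ℕ → ℝ) (hs : ∀ t ∈ Finset.Icc 1 T, s t ≤ ML t (lam t).1 (lam t).2) :
    ∀ θ : ℕ → EuclideanSpace ℝ (Fin d), (∀ t ∈ Finset.Icc 1 T, ‖θ t‖ ≤ C) →
      ∑ t ∈ Finset.Icc 1 T, s t ≤
        ∑ t ∈ Finset.Icc 1 T, ∑ i ∈ Finset.Icc 1 n, ℓ t i (θ t)
        + C * Real.sqrt (((n : ℝ) ^ 2 * Γ ^ 4 / 4 + 4 * C ^ 2 * (n : ℝ) ^ (2 * β) +
            4 * C ^ 4 * (n : ℝ) ^ (4 * β)) * (4 + C ^ 2) * T)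
        + Γ ^ 2 * T * (n : ℝ) ^ (1 - β) / 2
        + Real.sqrt ((1 / (T : ℝ)) * ∑ t ∈ Finset.Icc 1 T,
            ‖θ t - (1 / (T : ℝ)) • ∑ u ∈ Finset.Icc 1 T, θ u‖ ^ 2) * T *
          (Γ * Real.sqrt n + 1 / C) := by
  intro θ hθ
  subst hγhi
  have hn0 : (0 : ℝ) < n := by exact_mod_cast hn
  have hT0 : (0 : ℝ) < T := by exact_mod_cast hT
  have hγlo0 : 0 < γlo := hγlo ▸ Real.rpow_pos_of_pos hn0 _
  have hk : 0 ≤ Γ ^ 2 * n / 2 := by positivity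
  set f : ℕ → EuclideanSpace ℝ (Fin d) → ℝ := fun t x => ∑ i ∈ Finset.Icc 1 n, ℓ t i x
  have hMLeq : ∀ t ∈ Finset.Icc 1 T, ML t = metaLoss (f t) C (Γ ^ 2 * n / 2) :=
    fun t ht => funext₂ fun ϑ γ => by
      rw [hML t ht, metaLoss]
      congr 1
      ext r
      simp only [Set.mem_ofPred_eq, Set.mem_image, mem_closedBall_zero_iff, metaObjective, f]
      exact exists_congr fun x => and_congr_right' (by rw [eq_comm, mul_assoc γ, mul_div_assoc])
  have hfb : ∀ t ∈ Finset.Icc 1 T, BddBelow (f t '' closedBall 0 C) := fun t ht =>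
    (isCompact_closedBall 0 C).bddBelow_image (continuous_finsetSum _ fun i hi =>
      (LipschitzWith.of_dist_le' fun x y => by
        rw [Real.dist_eq, dist_eq_norm]
        exact hlip t ht i hi x y).continuous).continuousOn
  have hfc : ∀ t ∈ Finset.Icc 1 T, ConvexOn ℝ (closedBall 0 C) (f t) := fun t ht =>
    ⟨convex_closedBall 0 C, fun x _ y _ a b ha hb hab => by
      obtain rfl : b = 1 - a := by linarith
      simpa only [f, smul_eq_mul, Finset.mul_sum, ← Finset.sum_add_distrib] using
        Finset.sum_le_sum fun i hi => hconv t ht i hi x y a ha (by linarith)⟩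
  have hLsq : L ^ 2 = (n : ℝ) ^ 2 * Γ ^ 4 / 4 + 4 * C ^ 2 / γlo ^ 2 + 4 * C ^ 4 / γlo ^ 4 := by
    rw [hLdef, Real.sq_sqrt (by positivity)]
  have hL0 : 0 < L := hLdef ▸ Real.sqrt_pos.2 (by positivity)
  have hLip := (lipschitzConst_sq_le n Γ C γlo).trans_eq hLsq.symm
  have hα0 : 0 < α := hαdef ▸ by positivity
  obtain ⟨γs, hγs, hγs_le⟩ := exists_stepSize_le (σ := dispersion T θ) hΓ hn0 hC hγlo0
    (hγlo ▸ hβC) (Real.sqrt_nonneg _) (dispersion_le hT hθ)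
  have hreg := opms_regret hC.le hk hγlo0 hα0 hL0.le hLip hfb hfc hMLeq
    hlam1 hmem hmin (norm_avg_le hT hθ) hγs
  have hcomp := sum_metaLoss_avg_le hT hk (hγlo0.trans_le hγs.1) hfb hθ
  have hdiam := norm_sub_sq_add_sub_sq_le (norm_avg_le hT hθ) hlam1.1 hγlo0.le hγs hlam1.2
  have htuned := regret_at_tuned_step hC hL0 (by positivity : (0 : ℝ) < 4 + C ^ 2) hT0
  rw [← hαdef] at htuned
  have hML_avg : ∑ t ∈ Finset.Icc 1 T, ML t (avg T θ) γs
      = ∑ t ∈ Finset.Icc 1 T, metaLoss (f t) C (Γ ^ 2 * n / 2) (avg T θ) γs :=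
    Finset.sum_congr rfl fun t ht => by rw [hMLeq t ht]
  have hL2 : L ^ 2 = (n : ℝ) ^ 2 * Γ ^ 4 / 4 + 4 * C ^ 2 * (n : ℝ) ^ (2 * β) +
      4 * C ^ 4 * (n : ℝ) ^ (4 * β) := by
    rw [hLsq, hγlo, div_rpow_neg_pow hn0, div_rpow_neg_pow hn0]
    norm_num
  have hnβ : (n : ℝ) ^ (1 - β) = n * γlo := by
    rw [hγlo, sub_eq_add_neg, Real.rpow_add hn0, Real.rpow_one]
  rw [hnβ, ← hL2]
  change _ ≤ ∑ t ∈ Finset.Icc 1 T, f t (θ t) + _ + _ + dispersion T θ * T * _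
  have hD : (‖avg T θ - (lam 1).1‖ ^ 2 + (γs - (lam 1).2) ^ 2) / (2 * α)
      ≤ C ^ 2 * (4 + C ^ 2) / (2 * α) := by gcongr
  linarith [Finset.sum_le_sum hs, mul_le_mul_of_nonneg_left hγs_le hT0.le]

/-- Theorem 1 of the paper: meta-regret bound for OPMS applied to learning the
    initialization and step size of projected online gradient descent. -/
theorem oga_meta_learning_regret
    (d n T : ℕ) (hd : 1 ≤ d) (hn : 1 ≤ n) (hT : 1 ≤ T)
    (Γ C β : ℝ) (hΓ : 0 < Γ) (hC : 0 < C) (hβ : 0 < β)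
    (hβC : (n : ℝ) ^ (-β) ≤ C ^ 2)
    (ℓ : ℕ → ℕ → EuclideanSpace ℝ (Fin d) → ℝ)
    (hconv : ∀ t ∈ Finset.Icc 1 T, ∀ i ∈ Finset.Icc 1 n,
      ∀ x y : EuclideanSpace ℝ (Fin d), ∀ c : ℝ, 0 ≤ c → c ≤ 1 →
        ℓ t i (c • x + (1 - c) • y) ≤ c * ℓ t i x + (1 - c) * ℓ t i y)
    (hlip : ∀ t ∈ Finset.Icc 1 T, ∀ i ∈ Finset.Icc 1 n,
      ∀ x y : EuclideanSpace ℝ (Fin d), |ℓ t i x - ℓ t i y| ≤ Γ * ‖x - y‖)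
    (γlo γhi L α : ℝ)
    (hγlo : γlo = (n : ℝ) ^ (-β)) (hγhi : γhi = C ^ 2)
    (hLdef : L = Real.sqrt ((n : ℝ) ^ 2 * Γ ^ 4 / 4 + 4 * C ^ 2 / γlo ^ 2 +
      4 * C ^ 4 / γlo ^ 4))
    (hαdef : α = (C / L) * Real.sqrt ((4 + C ^ 2) / T))
    (ML : ℕ → EuclideanSpace ℝ (Fin d) → ℝ → ℝ)
    (hML : ∀ t ∈ Finset.Icc 1 T, ∀ ϑ : EuclideanSpace ℝ (Fin d), ∀ γ : ℝ,
      ML t ϑ γ = sInf {r : ℝ | ∃ θ : EuclideanSpace ℝ (Fin d), ‖θ‖ ≤ C ∧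
        r = ∑ i ∈ Finset.Icc 1 n, ℓ t i θ + γ * Γ ^ 2 * n / 2 + ‖θ - ϑ‖ ^ 2 / (2 * γ)})
    (lam : ℕ → EuclideanSpace ℝ (Fin d) × ℝ)
    (hlam1 : ‖(lam 1).1‖ ≤ C ∧ (lam 1).2 ∈ Set.Icc γlo γhi)
    (hmem : ∀ t ∈ Finset.Icc 1 T,
      ‖(lam (t + 1)).1‖ ≤ C ∧ (lam (t + 1)).2 ∈ Set.Icc γlo γhi)
    (hmin : ∀ t ∈ Finset.Icc 1 T, ∀ ϑ : EuclideanSpace ℝ (Fin d), ‖ϑ‖ ≤ C →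
      ∀ γ ∈ Set.Icc γlo γhi,
      ML t (lam (t + 1)).1 (lam (t + 1)).2 +
        (‖(lam (t + 1)).1 - (lam t).1‖ ^ 2 + ((lam (t + 1)).2 - (lam t).2) ^ 2) / (2 * α)
      ≤ ML t ϑ γ + (‖ϑ - (lam t).1‖ ^ 2 + (γ - (lam t).2) ^ 2) / (2 * α))
    (s : ℕ → ℝ) (hs : ∀ t ∈ Finset.Icc 1 T, s t ≤ ML t (lam t).1 (lam t).2) :
    ∀ θ : ℕ → EuclideanSpace ℝ (Fin d), (∀ t ∈ Finset.Icc 1 T, ‖θ t‖ ≤ C) →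
      ∑ t ∈ Finset.Icc 1 T, s t ≤
        ∑ t ∈ Finset.Icc 1 T, ∑ i ∈ Finset.Icc 1 n, ℓ t i (θ t)
        + C * Real.sqrt (((n : ℝ) ^ 2 * Γ ^ 4 / 4 + 4 * C ^ 2 * (n : ℝ) ^ (2 * β) +
            4 * C ^ 4 * (n : ℝ) ^ (4 * β)) * (4 + C ^ 2) * T)
        + Γ ^ 2 * T * (n : ℝ) ^ (1 - β) / 2
        + Real.sqrt ((1 / (T : ℝ)) * ∑ t ∈ Finset.Icc 1 T,
            ‖θ t - (1 / (T : ℝ)) • ∑ u ∈ Finset.Icc 1 T, θ u‖ ^ 2) * T *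
          (Γ * Real.sqrt n + 1 / C) :=
  oga_meta_learning_regret_general d n T hn hT Γ C β hΓ hC hβC ℓ hconv hlip γlo γhi L α hγlo hγhi
    hLdef hαdef ML hML lam hlam1 hmem hmin s hs
end

section
/- Let n, T ≥ 1 and M ≥ 1 be natural numbers, B > 0, and let Θ₀ be a finite set of cardinality M. For t = 1,…,T and i = 1,…,n let ℓ_{t,i} : Θ₀ → ℝ take values in [0, B]. Set b_t = max_{θ∈Θ₀, 1≤i≤n} ℓ_{t,i}(θ) and b = max_{1≤t≤T} b_t. For η ∈ [1/n, 1] define L_t(η) = min_{θ∈Θ₀} Σ_{i=1}^n ℓ_{t,i}(θ) + η n b_t²/8 + (log M)/η. Set L = n² log M + nB²/8 and α = (1/L)√(2/T). Let η_1 = 1 and, for t = 1,…,T, let η_{t+1} ∈ [1/n, 1] minimize η ↦ L_t(η) + (η - η_t)²/(2α) over [1/n, 1]. Suppose s_1,…,s_T ∈ ℝ satisfy s_t ≤ L_t(η_t) for each t. Then: Σ_{t=1}^T s_t ≤ Σ_{t=1}^T min_{θ∈Θ₀} Σ_{i=1}^n ℓ_{t,i}(θ) + bT√(n log M / 2) +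 T log M + b²T/8 + (n² log M + nB²/8)√(2T). -/
/-!
Each task loss `L_t(η) = m_t + c_t η + (log M) / η`, where `c_t = n b_t² / 8`, is convex on
`[1/n, 1]` with slope bounded by `c_t + n² log M ≤ L`. The proximal step minimises the
`1/α`-strongly convex function `L_t + (· - η_t)² / (2α)`, which yields the three-point inequality;
together with the slope bound and Young's inequality this gives, for every comparator `u`,
`L_t(η_t) ≤ L_t(u) + ((u - η_t)² - (u - η_{t+1})²) / (2α) + α L² / 2`.
Telescoping, `∑ L_t(η_t) ≤ ∑ L_t(u) + 1 / (2α) + T α L² / 2`, and the choice of `α` makes the last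
two terms at most `L √(2T)`. Finally `u` is the oracle rate `√(8 log M / (n b²))` clipped to
`[1/n, 1]`, for which `L_t(u) ≤ m_t + b √(n log M / 2) + log M + b² / 8`.
-/

open Set Filter Topology

lemma le_of_forall_one_sub_mul_le {A R : ℝ} (h : ∀ a ∈ Ioo (0 : ℝ) 1, (1 - a) * A ≤ R) :
    A ≤ R := by
  have hlim : Tendsto (fun a : ℝ => (1 - a) * A) (𝓝[>] 0) (𝓝 A) := by
    have : Tendsto (fun a : ℝ => (1 - a) * A) (𝓝 0) (𝓝 ((1 - 0) * A)) :=
      ((continuous_const.sub continuous_id).mul continuous_const).tendsto 0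
    simpa using this.mono_left nhdsWithin_le_nhds
  exact le_of_tendsto hlim (eventually_of_mem (Ioo_mem_nhdsGT one_pos) h)

section InnerProduct

variable {E : Type*} [NormedAddCommGroup E]

lemma StrongConvexOn.add_sq_norm_sub_le_of_isMinOn [NormedSpace ℝ E] {s : Set E} {m : ℝ}
    {F : E → ℝ} {e u : E} (hF : StrongConvexOn s m F) (he : e ∈ s) (hmin : IsMinOn F s e)
    (hu : u ∈ s) : F e + m / 2 * ‖u - e‖ ^ 2 ≤ F u := by
  suffices m / 2 * ‖u - e‖ ^ 2 ≤ F u - F e by linarith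
  refine le_of_forall_one_sub_mul_le fun a ⟨ha₀, ha₁⟩ => ?_
  have hb : 0 ≤ 1 - a := by linarith
  have hconv := hF.2 hu he ha₀.le hb (add_sub_cancel a 1)
  have hle := isMinOn_iff.1 hmin _ (hF.1 hu he ha₀.le hb (add_sub_cancel a 1))
  simp only [smul_eq_mul] at hconv
  have : a * ((1 - a) * (m / 2 * ‖u - e‖ ^ 2)) ≤ a * (F u - F e) := by linarith
  exact le_of_mul_le_mul_left this ha₀

lemma ConvexOn.strongConvexOn_add_sq_norm_sub_div [InnerProductSpace ℝ E] {s : Set E}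
    {f : E → ℝ} (hf : ConvexOn ℝ s f) (p : E) (α : ℝ) :
    StrongConvexOn s α⁻¹ fun x => f x + ‖x - p‖ ^ 2 / (2 * α) := by
  rw [strongConvexOn_iff_convex]
  have hlin := (-(α⁻¹ • innerₗ E p)).convexOn hf.1
  refine ((hf.add hlin).add_const (‖p‖ ^ 2 / (2 * α))).congr fun x _ => ?_
  simp only [Pi.add_apply, LinearMap.neg_apply, LinearMap.smul_apply, innerₗ_apply_apply,
    smul_eq_mul, norm_sub_sq_real, real_inner_comm x]
  ring

variable [InnerProductSpace ℝ E]

lemma ConvexOn.le_add_of_isMinOn_prox {s : Set E} {f : E → ℝ} {α G : ℝ} {p e u : E}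
    (hf : ConvexOn ℝ s f) (hα : 0 < α) (he : e ∈ s) (hu : u ∈ s)
    (hmin : IsMinOn (fun x => f x + ‖x - p‖ ^ 2 / (2 * α)) s e)
    (hG : f p - f e ≤ G * ‖p - e‖) :
    f p ≤ f u + (‖u - p‖ ^ 2 - ‖u - e‖ ^ 2) / (2 * α) + α * G ^ 2 / 2 := by
  have hthree := (hf.strongConvexOn_add_sq_norm_sub_div p α).add_sq_norm_sub_le_of_isMinOn
    he hmin hu
  have hyoung : G * ‖p - e‖ ≤ ‖p - e‖ ^ 2 / (2 * α) + α * G ^ 2 / 2 := by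
    rw [div_add' _ _ _ (by positivity), le_div_iff₀ (by positivity)]
    nlinarith [sq_nonneg (‖p - e‖ - α * G)]
  rw [norm_sub_rev e p] at hthree
  have : α⁻¹ / 2 * ‖u - e‖ ^ 2 = ‖u - e‖ ^ 2 / (2 * α) := by field_simp
  rw [sub_div]
  linarith

lemma ConvexOn.sum_le_of_isMinOn_prox {s : Set E} {f : ℕ → E → ℝ} {α G : ℝ} {T : ℕ}
    {η : ℕ → E} {u : E} (hf : ∀ t ∈ Finset.Icc 1 T, ConvexOn ℝ s (f t)) (hα : 0 < α)
    (hη : ∀ t ∈ Finset.Icc 1 T, η (t + 1) ∈ s) (hu : u ∈ s)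
    (hmin : ∀ t ∈ Finset.Icc 1 T,
      IsMinOn (fun x => f t x + ‖x - η t‖ ^ 2 / (2 * α)) s (η (t + 1)))
    (hG : ∀ t ∈ Finset.Icc 1 T, f t (η t) - f t (η (t + 1)) ≤ G * ‖η t - η (t + 1)‖) :
    ∑ t ∈ Finset.Icc 1 T, f t (η t) ≤
      ∑ t ∈ Finset.Icc 1 T, f t u + ‖u - η 1‖ ^ 2 / (2 * α) + T * (α * G ^ 2 / 2) := by
  obtain rfl | hT := Nat.eq_zero_or_pos T
  · simp only [Finset.Icc_eq_empty_of_lt zero_lt_one, Finset.sum_empty]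
    positivity
  have hstep := Finset.sum_le_sum fun t ht =>
    (hf t ht).le_add_of_isMinOn_prox hα (hη t ht) hu (hmin t ht) (hG t ht)
  have htel : ∑ t ∈ Finset.Icc 1 T, (‖u - η t‖ ^ 2 - ‖u - η (t + 1)‖ ^ 2) / (2 * α) =
      ‖u - η 1‖ ^ 2 / (2 * α) - ‖u - η (T + 1)‖ ^ 2 / (2 * α) := by
    rw [← neg_sub, ← Finset.sum_Icc_sub hT (fun t => ‖u - η t‖ ^ 2 / (2 * α)),
      ← Finset.sum_neg_distrib]
    exact Finset.sum_congr rfl fun t _ => by ring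
  rw [Finset.sum_add_distrib, Finset.sum_add_distrib, htel, Finset.sum_const, Nat.card_Icc,
    add_tsub_cancel_right, nsmul_eq_mul] at hstep
  have : 0 ≤ ‖u - η (T + 1)‖ ^ 2 / (2 * α) := by positivity
  linarith

end InnerProduct

lemma convexOn_const_add_mul_add_div (a c : ℝ) {d : ℝ} (hd : 0 ≤ d) :
    ConvexOn ℝ (Ioi 0) fun x => a + c * x + d / x := by
  have hlin := (LinearMap.mulLeft ℝ c).convexOn (convex_Ioi (0 : ℝ))
  refine (((convexOn_const a (convex_Ioi 0)).add hlin).add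
    ((convexOn_zpow (-1)).smul hd)).congr fun x _ => ?_
  simp [div_eq_mul_inv]

lemma const_add_mul_add_div_sub_le (a : ℝ) {c d lo p e : ℝ} (hc : 0 ≤ c) (hd : 0 ≤ d)
    (hlo : 0 < lo) (hp : lo ≤ p) (he : lo ≤ e) :
    (a + c * p + d / p) - (a + c * e + d / e) ≤ (c + d / lo ^ 2) * |p - e| := by
  have hp₀ : 0 < p := hlo.trans_le hp
  have he₀ : 0 < e := hlo.trans_le he
  calc (a + c * p + d / p) - (a + c * e + d / e) = (c - d / (p * e)) * (p - e) := by
        field_simp; ring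
    _ ≤ |c - d / (p * e)| * |p - e| := by rw [← abs_mul]; exact le_abs_self _
    _ ≤ (|c| + |d / (p * e)|) * |p - e| := by gcongr; exact abs_sub _ _
    _ = (c + d / (p * e)) * |p - e| := by rw [abs_of_nonneg hc, abs_of_nonneg (by positivity)]
    _ ≤ (c + d / lo ^ 2) * |p - e| := by gcongr; nlinarith

lemma exists_mem_Icc_mul_add_div_le {A d lo : ℝ} (hA : 0 ≤ A) (hd : 0 ≤ d) (hlo : 0 < lo)
    (hlo₁ : lo ≤ 1) : ∃ u ∈ Icc lo 1, A * u + d / u ≤ 2 * √(A * d) + d + lo * A := by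
  obtain ⟨s, hs, rfl⟩ : ∃ s, 0 ≤ s ∧ s ^ 2 = A := ⟨√A, Real.sqrt_nonneg A, Real.sq_sqrt hA⟩
  obtain ⟨r, hr, rfl⟩ : ∃ r, 0 ≤ r ∧ r ^ 2 = d := ⟨√d, Real.sqrt_nonneg d, Real.sq_sqrt hd⟩
  rw [← mul_pow, Real.sqrt_sq (mul_nonneg hs hr)]
  rcases le_or_gt s r with hsr | hrs
  · exact ⟨1, ⟨hlo₁, le_rfl⟩, by nlinarith⟩
  rcases le_total r (s * lo) with hrlo | hlor
  · refine ⟨lo, ⟨le_rfl, hlo₁⟩, ?_⟩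
    have : r ^ 2 / lo ≤ r * s := by rw [div_le_iff₀ hlo]; nlinarith
    nlinarith
  -- the unconstrained minimiser `r / s` lies in `[lo, 1]`
  have hs₀ : 0 < s := hr.trans_lt hrs
  refine ⟨r / s, ⟨by rwa [le_div_iff₀ hs₀, mul_comm], div_le_one_of_le₀ hrs.le hs₀.le⟩, ?_⟩
  have hr₀ : 0 < r := (mul_pos hs₀ hlo).trans_le hlor
  field_simp
  nlinarith

lemma exists_mem_Icc_ewa_bound_le {n b d : ℝ} (hn : 1 ≤ n) (hb : 0 ≤ b) (hd : 0 ≤ d) :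
    ∃ u ∈ Icc (1 / n) 1, ∀ β, 0 ≤ β → β ≤ b →
      u * n * β ^ 2 / 8 + d / u ≤ b * √(n * d / 2) + d + b ^ 2 / 8 := by
  have hn₀ : 0 < n := one_pos.trans_le hn
  obtain ⟨u, hu, hu_le⟩ := exists_mem_Icc_mul_add_div_le (A := n * b ^ 2 / 8) (by positivity) hd
    (by positivity) (div_le_one_of_le₀ hn hn₀.le)
  have hsqrt : 2 * √(n * b ^ 2 / 8 * d) = b * √(n * d / 2) := by
    rw [show n * b ^ 2 / 8 * d = (b / 2) ^ 2 * (n * d / 2) by ring,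
      Real.sqrt_mul (sq_nonneg _), Real.sqrt_sq (by positivity)]
    ring
  rw [hsqrt, show 1 / n * (n * b ^ 2 / 8) = b ^ 2 / 8 by field_simp] at hu_le
  refine ⟨u, hu, fun β hβ hβb => ?_⟩
  have hu₀ : 0 ≤ u := (one_div_pos.2 hn₀).le.trans hu.1
  nlinarith [mul_le_mul_of_nonneg_left (pow_le_pow_left₀ hβ hβb 2) (by positivity : 0 ≤ u * n)]

lemma one_div_two_mul_add_mul_le_mul_sqrt {L α : ℝ} {T : ℕ} (hL : 0 < L) (hT : 1 ≤ T)
    (hα : α = 1 / L * √(2 / T)) : 1 / (2 * α) + T * (α * L ^ 2 / 2) ≤ L * √(2 * T) := by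
  have hT₀ : (0 : ℝ) < T := by exact_mod_cast hT
  set r := √(2 / T) with hr
  have hr₀ : 0 < r := Real.sqrt_pos.2 (by positivity)
  have hr2 : T * r ^ 2 = 2 := by rw [hr, Real.sq_sqrt (by positivity)]; field_simp
  have hsqrt : √(2 * T) = T * r := by
    rw [hr, show (2 : ℝ) * T = T ^ 2 * (2 / T) by field_simp, Real.sqrt_mul (sq_nonneg _),
      Real.sqrt_sq hT₀.le]
  rw [hsqrt, hα]
  field_simp
  nlinarith

lemma sum_const_add_mul_add_div_le_of_prox {f : ℕ → ℝ → ℝ} {m c : ℕ → ℝ} {d lo α G : ℝ} {T : ℕ}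
    {η : ℕ → ℝ} {u : ℝ} (hf : ∀ t ∈ Finset.Icc 1 T, ∀ x, f t x = m t + c t * x + d / x)
    (hc : ∀ t ∈ Finset.Icc 1 T, 0 ≤ c t) (hd : 0 ≤ d) (hlo : 0 < lo)
    (hG : ∀ t ∈ Finset.Icc 1 T, c t + d / lo ^ 2 ≤ G) (hα : 0 < α)
    (hη₁ : η 1 ∈ Icc lo 1) (hη : ∀ t ∈ Finset.Icc 1 T, η (t + 1) ∈ Icc lo 1) (hu : u ∈ Icc lo 1)
    (hmin : ∀ t ∈ Finset.Icc 1 T, ∀ x ∈ Icc lo 1,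
      f t (η (t + 1)) + (η (t + 1) - η t) ^ 2 / (2 * α) ≤ f t x + (x - η t) ^ 2 / (2 * α)) :
    ∑ t ∈ Finset.Icc 1 T, f t (η t) ≤
      ∑ t ∈ Finset.Icc 1 T, f t u + (u - η 1) ^ 2 / (2 * α) + T * (α * G ^ 2 / 2) := by
  have hη' : ∀ t ∈ Finset.Icc 1 T, η t ∈ Icc lo 1 := by
    intro t ht
    obtain ⟨ht₁, htT⟩ := Finset.mem_Icc.1 ht
    rcases ht₁.eq_or_lt with rfl | ht₁
    · exact hη₁
    · have := hη (t - 1) (Finset.mem_Icc.2 ⟨by omega, by omega⟩)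
      rwa [Nat.sub_add_cancel ht₁.le] at this
  simpa only [Real.norm_eq_abs, sq_abs] using ConvexOn.sum_le_of_isMinOn_prox (s := Icc lo 1)
    (fun t ht => ((convexOn_const_add_mul_add_div (m t) (c t) hd).subset
      (fun x hx => hlo.trans_le hx.1) (convex_Icc lo 1)).congr fun x _ => (hf t ht x).symm)
    hα hη hu
    (fun t ht => isMinOn_iff.2 fun x hx => by
      simpa only [Real.norm_eq_abs, sq_abs] using hmin t ht x hx)
    (fun t ht => by
      rw [hf t ht, hf t ht, Real.norm_eq_abs]
      exact (const_add_mul_add_div_sub_le _ (hc t ht) hd hlo (hη' t ht).1 (hη t ht).1).trans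
        (mul_le_mul_of_nonneg_right (hG t ht) (abs_nonneg _)))

theorem ewa_rate_meta_learning_regret_general
    (n T M : ℕ) (hn : 1 ≤ n) (hT : 1 ≤ T)
    (B : ℝ) (hB : 0 < B)
    (Θ₀ : Type*)
    (ℓ : ℕ → ℕ → Θ₀ → ℝ)
    (hbound : ∀ t ∈ Finset.Icc 1 T, ∀ i ∈ Finset.Icc 1 n, ∀ θ : Θ₀,
      ℓ t i θ ∈ Set.Icc 0 B)
    (bt : ℕ → ℝ)
    (hbt : ∀ t ∈ Finset.Icc 1 T,
      IsGreatest {r : ℝ | ∃ θ : Θ₀, ∃ i ∈ Finset.Icc 1 n, r = ℓ t i θ} (bt t))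
    (b : ℝ) (hb : IsGreatest {r : ℝ | ∃ t ∈ Finset.Icc 1 T, r = bt t} b)
    (ML : ℕ → ℝ → ℝ)
    (hML : ∀ t ∈ Finset.Icc 1 T, ∀ η : ℝ,
      ML t η = sInf {r : ℝ | ∃ θ : Θ₀, r = ∑ i ∈ Finset.Icc 1 n, ℓ t i θ} +
        η * n * bt t ^ 2 / 8 + Real.log M / η)
    (L α : ℝ)
    (hLdef : L = (n : ℝ) ^ 2 * Real.log M + n * B ^ 2 / 8)
    (hαdef : α = (1 / L) * Real.sqrt (2 / T))
    (η : ℕ → ℝ) (hη1 : η 1 = 1)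
    (hηmem : ∀ t ∈ Finset.Icc 1 T, η (t + 1) ∈ Set.Icc (1 / (n : ℝ)) 1)
    (hmin : ∀ t ∈ Finset.Icc 1 T, ∀ x ∈ Set.Icc (1 / (n : ℝ)) 1,
      ML t (η (t + 1)) + (η (t + 1) - η t) ^ 2 / (2 * α) ≤
        ML t x + (x - η t) ^ 2 / (2 * α))
    (s : ℕ → ℝ) (hs : ∀ t ∈ Finset.Icc 1 T, s t ≤ ML t (η t)) :
    ∑ t ∈ Finset.Icc 1 T, s t ≤
      ∑ t ∈ Finset.Icc 1 T, sInf {r : ℝ | ∃ θ : Θ₀, r = ∑ i ∈ Finset.Icc 1 n, ℓ t i θ}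
      + b * T * Real.sqrt ((n : ℝ) * Real.log M / 2)
      + T * Real.log M
      + b ^ 2 * T / 8
      + ((n : ℝ) ^ 2 * Real.log M + n * B ^ 2 / 8) * Real.sqrt (2 * T) := by
  set m : ℕ → ℝ := fun t => sInf {r : ℝ | ∃ θ : Θ₀, r = ∑ i ∈ Finset.Icc 1 n, ℓ t i θ}
  set d := Real.log M
  have hd : 0 ≤ d := Real.log_natCast_nonneg M
  have hn₁ : (1 : ℝ) ≤ n := by exact_mod_cast hn
  have hbt_mem : ∀ t ∈ Finset.Icc 1 T, bt t ∈ Icc 0 B := fun t ht => by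
    obtain ⟨θ, i, hi, hθi⟩ := (hbt t ht).1
    exact hθi ▸ hbound t ht i hi θ
  have hb₀ : 0 ≤ b := by
    obtain ⟨t, ht, rfl⟩ := hb.1
    exact (hbt_mem t ht).1
  have hL : 0 < L := by rw [hLdef]; positivity
  have hα : 0 < α := by
    rw [hαdef]; exact mul_pos (by positivity) (Real.sqrt_pos.2 (by positivity))
  obtain ⟨u, hu, hu_le⟩ := exists_mem_Icc_ewa_bound_le hn₁ hb₀ hd
  have hregret := sum_const_add_mul_add_div_le_of_prox (c := fun t => n * bt t ^ 2 / 8) (G := L)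
    (fun t ht x => by rw [hML t ht]; ring) (fun t _ => by positivity) hd (by positivity)
    (fun t ht => by
      rw [hLdef, one_div, inv_pow, div_inv_eq_mul]
      nlinarith [pow_le_pow_left₀ (hbt_mem t ht).1 (hbt_mem t ht).2 2])
    hα (by rw [hη1]; exact ⟨div_le_one_of_le₀ hn₁ (by positivity), le_rfl⟩) hηmem hu hmin
  have hcomp : ∀ t ∈ Finset.Icc 1 T, ML t u ≤ m t + (b * √(n * d / 2) + d + b ^ 2 / 8) :=
    fun t ht => by
      rw [hML t ht]
      linarith [hu_le (bt t) (hbt_mem t ht).1 (hb.2 ⟨t, ht, rfl⟩)]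
  have hdist : (u - η 1) ^ 2 ≤ 1 := by
    rw [hη1]
    nlinarith [(by positivity : (0 : ℝ) < 1 / n).trans_le hu.1, hu.2]
  calc ∑ t ∈ Finset.Icc 1 T, s t ≤ ∑ t ∈ Finset.Icc 1 T, ML t (η t) := Finset.sum_le_sum hs
    _ ≤ ∑ t ∈ Finset.Icc 1 T, ML t u + (u - η 1) ^ 2 / (2 * α) + T * (α * L ^ 2 / 2) := hregret
    _ ≤ ∑ t ∈ Finset.Icc 1 T, (m t + (b * √(n * d / 2) + d + b ^ 2 / 8)) + 1 / (2 * α)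
        + T * (α * L ^ 2 / 2) := by gcongr with t ht; exact hcomp t ht
    _ ≤ _ := by
      rw [Finset.sum_add_distrib, Finset.sum_const, Nat.card_Icc, add_tsub_cancel_right,
        nsmul_eq_mul, ← hLdef]
      linarith [one_div_two_mul_add_mul_le_mul_sqrt hL hT hαdef]

/-- Theorem 2 of the paper: meta-learning the learning rate η of exponentially
    weighted aggregation (EWA) over a finite set Θ₀ of M predictors via OPMS. -/
theorem ewa_rate_meta_learning_regret
    (n T M : ℕ) (hn : 1 ≤ n) (hT : 1 ≤ T) (hM : 1 ≤ M)
    (B : ℝ) (hB : 0 < B)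
    (Θ₀ : Type*) [Fintype Θ₀] (hcard : Fintype.card Θ₀ = M)
    (ℓ : ℕ → ℕ → Θ₀ → ℝ)
    (hbound : ∀ t ∈ Finset.Icc 1 T, ∀ i ∈ Finset.Icc 1 n, ∀ θ : Θ₀,
      ℓ t i θ ∈ Set.Icc 0 B)
    (bt : ℕ → ℝ)
    (hbt : ∀ t ∈ Finset.Icc 1 T,
      IsGreatest {r : ℝ | ∃ θ : Θ₀, ∃ i ∈ Finset.Icc 1 n, r = ℓ t i θ} (bt t))
    (b : ℝ) (hb : IsGreatest {r : ℝ | ∃ t ∈ Finset.Icc 1 T, r = bt t} b)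
    (ML : ℕ → ℝ → ℝ)
    (hML : ∀ t ∈ Finset.Icc 1 T, ∀ η : ℝ,
      ML t η = sInf {r : ℝ | ∃ θ : Θ₀, r = ∑ i ∈ Finset.Icc 1 n, ℓ t i θ} +
        η * n * bt t ^ 2 / 8 + Real.log M / η)
    (L α : ℝ)
    (hLdef : L = (n : ℝ) ^ 2 * Real.log M + n * B ^ 2 / 8)
    (hαdef : α = (1 / L) * Real.sqrt (2 / T))
    (η : ℕ → ℝ) (hη1 : η 1 = 1)
    (hηmem : ∀ t ∈ Finset.Icc 1 T, η (t + 1) ∈ Set.Icc (1 / (n : ℝ)) 1)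
    (hmin : ∀ t ∈ Finset.Icc 1 T, ∀ x ∈ Set.Icc (1 / (n : ℝ)) 1,
      ML t (η (t + 1)) + (η (t + 1) - η t) ^ 2 / (2 * α) ≤
        ML t x + (x - η t) ^ 2 / (2 * α))
    (s : ℕ → ℝ) (hs : ∀ t ∈ Finset.Icc 1 T, s t ≤ ML t (η t)) :
    ∑ t ∈ Finset.Icc 1 T, s t ≤
      ∑ t ∈ Finset.Icc 1 T, sInf {r : ℝ | ∃ θ : Θ₀, r = ∑ i ∈ Finset.Icc 1 n, ℓ t i θ}
      + b * T * Real.sqrt ((n : ℝ) * Real.log M / 2)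
      + T * Real.log M
      + b ^ 2 * T / 8
      + ((n : ℝ) ^ 2 * Real.log M + n * B ^ 2 / 8) * Real.sqrt (2 * T) :=
  ewa_rate_meta_learning_regret_general n T M hn hT B hB Θ₀ ℓ hbound bt hbt b hb ML hML L α hLdef
    hαdef η hη1 hηmem hmin s hs
end
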